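/- Let C ⊆ F_{q^m}^n be an F_{q^m}-linear vector rank-metric code and let Γ = {γ_1,…,γ_m} and Γ' = {γ'_1,…,γ'_m} be orthogonal bases of F_{q^m} over F_q, i.e. Tr(γ_i γ'_j) = 1 if i = j and 0 otherwise, where Tr is the field trace from F_{q^m} to F_q. Then Γ(C)^⊥ = Γ'(C^⊥), where Γ(C)^⊥ is the dual of Γ(C) under the trace bilinear form (M,N) ↦ tr(M N^T) on Mat_{n×m}(F_q), and C^⊥ = {v ∈ F_{q^m}^n : ⟨v,w⟩ = 0 for all w ∈ C} is the dual under the standard inner product of F_{q^m}^n. -/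

import Mathlib

open Matrix

/-- The `Fq`-linear map `v ↦ Γ(v)` from `Fqm^n` to `n × m` matrices over `Fq`,
where `Γ(v) i j` is the `j`-th coordinate of `v i` in the basis `Γ`. -/
noncomputable def gammaLin {Fq Fqm : Type*} [Field Fq] [Field Fqm] [Algebra Fq Fqm]
    {n m : ℕ} (Γ : Module.Basis (Fin m) Fq Fqm) :
    (Fin n → Fqm) →ₗ[Fq] Matrix (Fin n) (Fin m) Fq where
  toFun v := Matrix.of fun i j => Γ.repr (v i) j
  map_add' v w := by ext i j; simp
  map_smul' c v := by ext i j; simp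

/-- The dual of a matrix rank-metric code under the trace bilinear form
`(M, N) ↦ tr (M * Nᵀ)`. -/
def dualMat {Fq : Type*} [Field Fq] {n m : ℕ}
    (C : Submodule Fq (Matrix (Fin n) (Fin m) Fq)) :
    Submodule Fq (Matrix (Fin n) (Fin m) Fq) where
  carrier := {M | ∀ N ∈ C, Matrix.trace (M * Nᵀ) = 0}
  add_mem' := fun {a b} ha hb N hN => by
    simp [Matrix.add_mul, ha N hN, hb N hN]
  zero_mem' := fun N hN => by simp
  smul_mem' := fun c a ha N hN => by
    simp [Matrix.smul_mul, ha N hN]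

/-- The dual of a vector rank-metric code under the standard inner product of `Fqm^n`. -/
def dualVec {Fqm : Type*} [Field Fqm] {n : ℕ}
    (C : Submodule Fqm (Fin n → Fqm)) : Submodule Fqm (Fin n → Fqm) where
  carrier := {v | ∀ w ∈ C, ∑ i, v i * w i = 0}
  add_mem' := fun {a b} ha hb w hw => by
    simp [add_mul, Finset.sum_add_distrib, ha w hw, hb w hw]
  zero_mem' := fun w hw => by simp
  smul_mem' := fun c a ha w hw => by
    simp [smul_eq_mul, mul_assoc, ← Finset.mul_sum, ha w hw]

/-!
Dual bases turn the trace form into the coordinate pairing: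
`Tr (x * y) = ∑ j, Γ(x)_j * Γ'(y)_j`, hence `tr (Γ'(w) * Γ(v)ᵀ) = Tr ⟨v, w⟩`. This gives
`Γ'(C^⊥) ⊆ Γ(C)^⊥` at once. Conversely, if `Γ'(w) ∈ Γ(C)^⊥` then `Tr (c * ⟨u, w⟩) = 0` for all
`c` and `u ∈ C`, because `C` is `Fqm`-linear, and nondegeneracy of the trace form gives
`⟨u, w⟩ = 0`. Since `Γ'` is a bijection onto all matrices, the two codes coincide.
-/

section TraceDualBasis

variable {R S ι : Type*} [CommRing R] [CommRing S] [Algebra R S] [Fintype ι] [DecidableEq ι]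
  (b b' : Module.Basis ι R S)

def Module.Basis.IsTraceDual : Prop :=
  ∀ i j, Algebra.trace R S (b i * b' j) = if i = j then 1 else 0

theorem Module.Basis.repr_eq_trace_mul_of_isTraceDual
    (hbb' : b.IsTraceDual b') (x : S) (j : ι) :
    b.repr x j = Algebra.trace R S (x * b' j) :=
  calc b.repr x j = ∑ i, Algebra.trace R S (b.repr x i • b i * b' j) := by
        simp [hbb' _ j]
    _ = Algebra.trace R S (x * b' j) := by rw [← map_sum, ← Finset.sum_mul, b.sum_repr]

theorem Module.Basis.trace_mul_eq_sum_repr_mul_repr_of_isTraceDual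
    (hbb' : b.IsTraceDual b') (x y : S) :
    Algebra.trace R S (x * y) = ∑ j, b.repr x j * b'.repr y j :=
  calc Algebra.trace R S (x * y) = ∑ j, Algebra.trace R S (x * b'.repr y j • b' j) := by
        rw [← map_sum, ← Finset.mul_sum, b'.sum_repr]
    _ = ∑ j, b.repr x j * b'.repr y j := by
      simp [b.repr_eq_trace_mul_of_isTraceDual b' hbb', mul_comm]

theorem Module.Basis.eq_zero_of_forall_trace_mul_eq_zero_of_isTraceDual
    (hbb' : b.IsTraceDual b') (x : S)
    (hx : ∀ c, Algebra.trace R S (c * x) = 0) : x = 0 := by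
  refine b'.ext_elem fun j => ?_
  have := hx (b j)
  rw [b.trace_mul_eq_sum_repr_mul_repr_of_isTraceDual b' hbb'] at this
  simpa [Module.Basis.repr_self, Finsupp.single_apply] using this

end TraceDualBasis

section GammaLin

variable {Fq Fqm : Type*} [Field Fq] [Field Fqm] [Algebra Fq Fqm] {n m : ℕ}

@[simp]
theorem gammaLin_apply (Γ : Module.Basis (Fin m) Fq Fqm) (v : Fin n → Fqm) (i : Fin n) (j : Fin m) :
    gammaLin Γ v i j = Γ.repr (v i) j :=
  rfl

theorem gammaLin_bijective (Γ : Module.Basis (Fin m) Fq Fqm) :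
    Function.Bijective (gammaLin (n := n) Γ) := by
  refine ⟨fun v w h => funext fun i => Γ.ext_elem fun j => congrFun (congrFun h i) j,
    fun M => ⟨fun i => Γ.equivFun.symm (M i), ?_⟩⟩
  ext i j
  exact congrFun (Γ.equivFun.apply_symm_apply (M i)) j

theorem trace_gammaLin_mul_transpose_gammaLin {Γ Γ' : Module.Basis (Fin m) Fq Fqm}
    (hΓΓ' : Γ.IsTraceDual Γ') (w v : Fin n → Fqm) :
    trace (gammaLin Γ' w * (gammaLin Γ v)ᵀ) = Algebra.trace Fq Fqm (∑ i, v i * w i) := by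
  simp only [trace, diag, mul_apply, transpose_apply, gammaLin_apply, map_sum,
    Γ.trace_mul_eq_sum_repr_mul_repr_of_isTraceDual Γ' hΓΓ']
  exact Finset.sum_congr rfl fun i _ => Finset.sum_congr rfl fun j _ => mul_comm _ _

theorem gammaLin_mem_dualMat_iff {Γ Γ' : Module.Basis (Fin m) Fq Fqm} (hΓΓ' : Γ.IsTraceDual Γ')
    (C : Submodule Fqm (Fin n → Fqm)) (w : Fin n → Fqm) :
    gammaLin Γ' w ∈ dualMat (Submodule.map (gammaLin Γ) (C.restrictScalars Fq)) ↔
      w ∈ dualVec C := by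
  simp only [dualMat, dualVec, Submodule.mem_mk, AddSubmonoid.mem_mk, AddSubsemigroup.mem_mk,
    Set.mem_ofPred_eq, Submodule.mem_map, Submodule.restrictScalars_mem, forall_exists_index,
    and_imp, forall_apply_eq_imp_iff₂, trace_gammaLin_mul_transpose_gammaLin hΓΓ']
  refine ⟨fun h u hu => ?_, fun h v hv => ?_⟩
  · refine Γ.eq_zero_of_forall_trace_mul_eq_zero_of_isTraceDual Γ' hΓΓ' _ fun c => ?_
    have hcu : ∑ i, (c • u) i * w i = c * ∑ i, w i * u i := by
      rw [Finset.mul_sum]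
      exact Finset.sum_congr rfl fun i _ => by rw [Pi.smul_apply, smul_eq_mul]; ring
    rw [← hcu]
    exact h (c • u) (C.smul_mem c hu)
  · simp [mul_comm (v _), h v hv]

end GammaLin

theorem stmt13_general {Fq Fqm : Type*} [Field Fq] [Field Fqm] [Algebra Fq Fqm]
    {n m : ℕ} (Γ Γ' : Module.Basis (Fin m) Fq Fqm)
    (horth : ∀ i j : Fin m,
      Algebra.trace Fq Fqm (Γ i * Γ' j) = if i = j then 1 else 0)
    (C : Submodule Fqm (Fin n → Fqm)) :
    dualMat (Submodule.map (gammaLin Γ) (C.restrictScalars Fq)) =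
      Submodule.map (gammaLin Γ') ((dualVec C).restrictScalars Fq) := by
  ext M
  obtain ⟨w, rfl⟩ := (gammaLin_bijective Γ').surjective M
  rw [gammaLin_mem_dualMat_iff horth]
  exact ⟨fun hw => ⟨w, hw, rfl⟩, fun ⟨v, hv, hvw⟩ => (gammaLin_bijective Γ').injective hvw ▸ hv⟩

/-- If `Γ` and `Γ'` are orthogonal bases of `Fqm` over `Fq`, then `Γ(C)^⊥ = Γ'(C^⊥)`. -/
theorem stmt13 {Fq Fqm : Type*} [Field Fq] [Fintype Fq] [Field Fqm] [Algebra Fq Fqm]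
    {n m : ℕ} (hn : 0 < n) (Γ Γ' : Module.Basis (Fin m) Fq Fqm)
    (horth : ∀ i j : Fin m,
      Algebra.trace Fq Fqm (Γ i * Γ' j) = if i = j then 1 else 0)
    (C : Submodule Fqm (Fin n → Fqm)) :
    dualMat (Submodule.map (gammaLin Γ) (C.restrictScalars Fq)) =
      Submodule.map (gammaLin Γ') ((dualVec C).restrictScalars Fq) :=
  stmt13_general Γ Γ' horth C
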